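/- arXiv:hep-th/0304136 — 2 statements merged into one kernel-verified Lean document; each statement's English description precedes it below -/
import Mathlib

section
/- For every k ∈ {1,2,3}, t ∈ ℝ, and Θ, the vector v_k(Θ,t) is an eigenvector of the position operator r̂_k(t) with eigenvalue (−1)^{θ_k} √(p − q(Θ) + θ_k): r̂_k(t) v_k(Θ,t) = (−1)^{θ_k} √(p − q(Θ) + θ_k) · v_k(Θ,t). -/
open scoped BigOperators
open Finset

/-- Index set: triples Θ = (θ₁,θ₂,θ₃) with θᵢ ∈ {0,1}. -/
abbrev WIdx := Fin 3 → Fin 2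

/-- The 8-dimensional state space V = EuclideanSpace ℂ ({0,1}³). -/
abbrev WV := EuclideanSpace ℂ WIdx

/-- Orthonormal basis vector e_Θ. -/
noncomputable def eV (Θ : WIdx) : WV := EuclideanSpace.single Θ 1

/-- The basis (e_Θ)_Θ of V, as a `Basis`. -/
noncomputable def bV : Module.Basis WIdx ℂ WV := (EuclideanSpace.basisFun WIdx ℂ).toBasis

/-- q(Θ) = θ₁ + θ₂ + θ₃. -/
def qv (Θ : WIdx) : ℕ := ∑ j, (Θ j : ℕ)

/-- Sign factor (−1)^(θ₁ + ⋯ + θ_{i−1}). -/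
def sgnBelow (i : Fin 3) (Θ : WIdx) : ℂ :=
  (-1 : ℂ) ^ (∑ j : Fin 3, if (j : ℕ) < (i : ℕ) then (Θ j : ℕ) else 0)

/-- Sign factor (−1)^(θ₁ + ⋯ + θ_i). -/
def sgnUpTo (i : Fin 3) (Θ : WIdx) : ℂ :=
  (-1 : ℂ) ^ (∑ j : Fin 3, if (j : ℕ) ≤ (i : ℕ) then (Θ j : ℕ) else 0)

/-- A_i⁻ e_Θ = θ_i (−1)^(θ₁+⋯+θ_{i−1}) √(p−q(Θ)+1) e_{Θ[θ_i↦0]}. -/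
noncomputable def Aminus (p : ℕ) (i : Fin 3) : WV →ₗ[ℂ] WV :=
  bV.constr ℂ fun Θ =>
    (((Θ i : ℕ) : ℂ) * sgnBelow i Θ *
      ((Real.sqrt ((p : ℝ) - (qv Θ : ℝ) + 1) : ℝ) : ℂ)) • eV (Function.update Θ i 0)

/-- A_i⁺ e_Θ = (1−θ_i) (−1)^(θ₁+⋯+θ_{i−1}) √(p−q(Θ)) e_{Θ[θ_i↦1]}. -/
noncomputable def Aplus (p : ℕ) (i : Fin 3) : WV →ₗ[ℂ] WV :=
  bV.constr ℂ fun Θ =>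
    (((1 : ℂ) - ((Θ i : ℕ) : ℂ)) * sgnBelow i Θ *
      ((Real.sqrt ((p : ℝ) - (qv Θ : ℝ)) : ℝ) : ℂ)) • eV (Function.update Θ i 1)

/-- Anticommutator {X,Y} = XY + YX. -/
noncomputable def acommOp (X Y : WV →ₗ[ℂ] WV) : WV →ₗ[ℂ] WV := X ∘ₗ Y + Y ∘ₗ X

/-- Commutator [X,Y] = XY − YX. -/
noncomputable def commOp (X Y : WV →ₗ[ℂ] WV) : WV →ₗ[ℂ] WV := X ∘ₗ Y - Y ∘ₗ X

/-- Dimensionless Hamiltonian ĥ = Σᵢ {A_i⁺, A_i⁻}. -/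
noncomputable def hOp (p : ℕ) : WV →ₗ[ℂ] WV := ∑ i, acommOp (Aplus p i) (Aminus p i)

/-- Position operator r̂_k(t) = e^{−it} A_k⁺ + e^{it} A_k⁻. -/
noncomputable def rOp (p : ℕ) (k : Fin 3) (t : ℝ) : WV →ₗ[ℂ] WV :=
  Complex.exp (-(t : ℂ) * Complex.I) • Aplus p k +
    Complex.exp ((t : ℂ) * Complex.I) • Aminus p k

/-- Momentum operator p̂_k(t) = −i (e^{−it} A_k⁺ − e^{it} A_k⁻). -/
noncomputable def pOp (p : ℕ) (k : Fin 3) (t : ℝ) : WV →ₗ[ℂ] WV :=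
  (-Complex.I) • (Complex.exp (-(t : ℂ) * Complex.I) • Aplus p k -
    Complex.exp ((t : ℂ) * Complex.I) • Aminus p k)

/-- Levi-Civita symbol ε_{jkl} with ε_{123} = 1 (indices 0,1,2 here). -/
def eps (j k l : Fin 3) : ℂ :=
  if (j, k, l) = (0, 1, 2) ∨ (j, k, l) = (1, 2, 0) ∨ (j, k, l) = (2, 0, 1) then 1
  else if (j, k, l) = (2, 1, 0) ∨ (j, k, l) = (1, 0, 2) ∨ (j, k, l) = (0, 2, 1) then -1
  else 0

/-- Angular momentum M_j = −i Σ_{k,l} ε_{jkl} {A_k⁺, A_l⁻}. -/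
noncomputable def Mop (p : ℕ) (j : Fin 3) : WV →ₗ[ℂ] WV :=
  (-Complex.I) • ∑ k, ∑ l, eps j k l • acommOp (Aplus p k) (Aminus p l)

/-- Eigenvectors v_k(Θ,t) of the position operator r̂_k(t). -/
noncomputable def vVec (k : Fin 3) (t : ℝ) (Θ : WIdx) : WV :=
  (((Real.sqrt 2)⁻¹ : ℝ) : ℂ) •
    (eV (Function.update Θ k 0) +
      (sgnUpTo k Θ * Complex.exp (-(t : ℂ) * Complex.I)) • eV (Function.update Θ k 1))

/-- Eigenvectors ṽ_k(Θ,t) of the momentum operator p̂_k(t). -/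
noncomputable def vTilde (k : Fin 3) (t : ℝ) (Θ : WIdx) : WV :=
  (((Real.sqrt 2)⁻¹ : ℝ) : ℂ) •
    (eV (Function.update Θ k 0) -
      (Complex.I * sgnUpTo k Θ * Complex.exp (-(t : ℂ) * Complex.I)) • eV (Function.update Θ k 1))

/-- The non-stationary state z = (1/√2)(e_{(0,0,0)} + e_{(0,0,1)}). -/
noncomputable def zState : WV :=
  (((Real.sqrt 2)⁻¹ : ℝ) : ℂ) • (eV ![0, 0, 0] + eV ![0, 0, 1])

/-- The state x₁ = (1/√2)(e_{(0,1,0)} + e_{(1,1,0)}). -/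
noncomputable def x1State : WV :=
  (((Real.sqrt 2)⁻¹ : ℝ) : ℂ) • (eV ![0, 1, 0] + eV ![1, 1, 0])

local notation "⟪" x ", " y "⟫" => @inner ℂ _ _ x y

/-! On the plane spanned by `e_{Θ[θ_k↦0]}` and `e_{Θ[θ_k↦1]}` the ladder operators `A_k^±` act as
`s λ` times the raising and lowering maps, with `s = (−1)^{θ₁+⋯+θ_{k−1}}` and
`λ = √(p − q(Θ[θ_k↦0])) = √(p − q(Θ) + θ_k)`. Hence `r̂_k(t)` restricts to the off-diagonal matrix
`λ [[0, s e^{it}], [s e^{−it}, 0]]`, whose eigenvectors are `e₀ ± s e^{−it} e₁` with eigenvalues `±λ`;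
the factor `(−1)^{θ_k}` in `(−1)^{θ₁+⋯+θ_k}` picks the sign. -/

lemma eV_eq_bV (Θ : WIdx) : eV Θ = bV Θ := by
  simp [bV, eV, EuclideanSpace.basisFun_apply]

lemma Aplus_eV (p : ℕ) (i : Fin 3) (Θ : WIdx) :
    Aplus p i (eV Θ) = (((1 : ℂ) - ((Θ i : ℕ) : ℂ)) * sgnBelow i Θ *
      ((Real.sqrt ((p : ℝ) - (qv Θ : ℝ)) : ℝ) : ℂ)) • eV (Function.update Θ i 1) := by
  rw [Aplus, eV_eq_bV, Module.Basis.constr_basis]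

lemma Aminus_eV (p : ℕ) (i : Fin 3) (Θ : WIdx) :
    Aminus p i (eV Θ) = (((Θ i : ℕ) : ℂ) * sgnBelow i Θ *
      ((Real.sqrt ((p : ℝ) - (qv Θ : ℝ) + 1) : ℝ) : ℂ)) • eV (Function.update Θ i 0) := by
  rw [Aminus, eV_eq_bV, Module.Basis.constr_basis]

lemma qv_update_zero_add (k : Fin 3) (Θ : WIdx) :
    qv (Function.update Θ k 0) + (Θ k : ℕ) = qv Θ := by
  fin_cases k <;> simp [qv, Fin.sum_univ_three, Function.update] <;> omega

lemma qv_update_one (k : Fin 3) (Θ : WIdx) :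
    qv (Function.update Θ k 1) = qv (Function.update Θ k 0) + 1 := by
  fin_cases k <;> simp [qv, Fin.sum_univ_three, Function.update] <;> omega

lemma sgnBelow_update (k : Fin 3) (Θ : WIdx) (c : Fin 2) :
    sgnBelow k (Function.update Θ k c) = sgnBelow k Θ := by
  unfold sgnBelow
  congr 1
  refine Finset.sum_congr rfl fun j _ => ?_
  split_ifs with hj
  · rw [Function.update_of_ne (Fin.ne_of_lt hj)]
  · rfl

lemma sgnBelow_mul_self (k : Fin 3) (Θ : WIdx) : sgnBelow k Θ * sgnBelow k Θ = 1 := by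
  rw [sgnBelow, ← pow_add, ← two_mul, pow_mul]
  norm_num

lemma sgnUpTo_eq_sgnBelow_mul (k : Fin 3) (Θ : WIdx) :
    sgnUpTo k Θ = sgnBelow k Θ * (-1 : ℂ) ^ (Θ k : ℕ) := by
  fin_cases k <;>
    simp [sgnUpTo, sgnBelow, Fin.sum_univ_three, pow_add]

section Ladder

variable (p : ℕ) (k : Fin 3) (Θ : WIdx)

lemma Aplus_eV_update_zero :
    Aplus p k (eV (Function.update Θ k 0)) =
      (sgnBelow k Θ * ((Real.sqrt ((p : ℝ) - qv (Function.update Θ k 0)) : ℝ) : ℂ)) •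
        eV (Function.update Θ k 1) := by
  simp [Aplus_eV, sgnBelow_update]

lemma Aplus_eV_update_one : Aplus p k (eV (Function.update Θ k 1)) = 0 := by
  simp [Aplus_eV]

lemma Aminus_eV_update_zero : Aminus p k (eV (Function.update Θ k 0)) = 0 := by
  simp [Aminus_eV]

lemma Aminus_eV_update_one :
    Aminus p k (eV (Function.update Θ k 1)) =
      (sgnBelow k Θ * ((Real.sqrt ((p : ℝ) - qv (Function.update Θ k 0)) : ℝ) : ℂ)) •
        eV (Function.update Θ k 0) := by
  have hq : (p : ℝ) - qv (Function.update Θ k 1) + 1 = p - qv (Function.update Θ k 0) := by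
    rw [qv_update_one]; push_cast; ring
  simp [Aminus_eV, sgnBelow_update, hq]

end Ladder

lemma sqrt_sub_qv_add_val (p : ℕ) (k : Fin 3) (Θ : WIdx) :
    Real.sqrt ((p : ℝ) - qv Θ + (Θ k : ℕ)) = Real.sqrt ((p : ℝ) - qv (Function.update Θ k 0)) := by
  rw [← qv_update_zero_add k Θ]
  push_cast
  congr 1
  ring

theorem stmt12_general (p : ℕ) (k : Fin 3) (t : ℝ) (Θ : WIdx) :
    rOp p k t (vVec k t Θ) =
      (((-1 : ℂ) ^ (Θ k : ℕ)) *
        ((Real.sqrt ((p : ℝ) - (qv Θ : ℝ) + (Θ k : ℕ)) : ℝ) : ℂ)) • vVec k t Θ := by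
  have hε : ((-1 : ℂ) ^ (Θ k : ℕ)) ^ 2 = 1 := by rw [← pow_mul, pow_mul']; norm_num
  have hexp : Complex.exp (-t * Complex.I) * Complex.exp (t * Complex.I) = 1 := by
    rw [← Complex.exp_add, neg_mul, neg_add_cancel, Complex.exp_zero]
  simp only [rOp, vVec, sgnUpTo_eq_sgnBelow_mul, sqrt_sub_qv_add_val, map_smul, map_add,
    LinearMap.add_apply, LinearMap.smul_apply, Aplus_eV_update_zero, Aplus_eV_update_one,
    Aminus_eV_update_zero, Aminus_eV_update_one, smul_zero, add_zero, zero_add, smul_add, smul_smul]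
  generalize Complex.exp (-t * Complex.I) = u, Complex.exp (t * Complex.I) = w at *
  generalize (-1 : ℂ) ^ (Θ k : ℕ) = ε at *
  generalize ((Real.sqrt ((p : ℝ) - qv (Function.update Θ k 0)) : ℝ) : ℂ) = l
  match_scalars
  · linear_combination (-(Real.sqrt 2 : ℂ)⁻¹ * u * sgnBelow k Θ * l) * hε
  · linear_combination (Real.sqrt 2 : ℂ)⁻¹ * l * ε * (u * w * sgnBelow_mul_self k Θ + hexp)

/-- r̂_k(t) v_k(Θ,t) = (−1)^{θ_k} √(p − q(Θ) + θ_k) v_k(Θ,t). -/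
theorem stmt12 (p : ℕ) (hp : 3 ≤ p) (k : Fin 3) (t : ℝ) (Θ : WIdx) :
    rOp p k t (vVec k t Θ) =
      (((-1 : ℂ) ^ (Θ k : ℕ)) *
        ((Real.sqrt ((p : ℝ) - (qv Θ : ℝ) + (Θ k : ℕ)) : ℝ) : ℂ)) • vVec k t Θ :=
  stmt12_general p k t Θ
end

section
/- For the non-stationary state z = (1/√2)(e_{(0,0,0)} + e_{(0,0,1)}) the mean trajectories are: ⟨z, r̂_1(t) z⟩ = ⟨z, r̂_2(t) z⟩ = 0, ⟨z, r̂_3(t) z⟩ = √p · cos t, ⟨z, p̂_1(t) z⟩ = ⟨z, p̂_2(t) z⟩ = 0, and ⟨z, p̂_3(t) z⟩ = −√p · sin t, for all t ∈ ℝ. -/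
/-! Among the matrix elements of the ladder operators between e_{(0,0,0)} and e_{(0,0,1)}, only
A₃⁺ e_{(0,0,0)} = √p e_{(0,0,1)} and A₃⁻ e_{(0,0,1)} = √p e_{(0,0,0)} survive (A₃^± is `Aplus p 2`,
`Aminus p 2`): A_k^± for k ≠ 3 flips θ_k and so leaves span{e_{(0,0,0)}, e_{(0,0,1)}}. Hence
⟨z, A₃^± z⟩ = √p/2, all other ⟨z, A_k^± z⟩ vanish, and the trajectories are √p (e^{-it} ± e^{it})/2
up to the factor −i in p̂. -/

open scoped BigOperators
open Finset

local notation "⟪" x ", " y "⟫" => @inner ℂ _ _ x y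

lemma bV_apply (Θ : WIdx) : bV Θ = eV Θ := by
  simp [bV, eV, OrthonormalBasis.coe_toBasis]

lemma inner_eV_eV (a b : WIdx) : ⟪eV a, eV b⟫ = if a = b then 1 else 0 := by
  simp [eV, EuclideanSpace.inner_single_left]

lemma inner_eV_Aplus_eV (p : ℕ) (i : Fin 3) (a b : WIdx) :
    ⟪eV a, Aplus p i (eV b)⟫ =
      if a = Function.update b i 1 then
        ((1 : ℂ) - ((b i : ℕ) : ℂ)) * sgnBelow i b * ((Real.sqrt ((p : ℝ) - (qv b : ℝ)) : ℝ) : ℂ)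
      else 0 := by
  rw [← bV_apply b, Aplus, Module.Basis.constr_basis, inner_smul_right, inner_eV_eV]
  split_ifs <;> simp

lemma inner_eV_Aminus_eV (p : ℕ) (i : Fin 3) (a b : WIdx) :
    ⟪eV a, Aminus p i (eV b)⟫ =
      if a = Function.update b i 0 then
        ((b i : ℕ) : ℂ) * sgnBelow i b * ((Real.sqrt ((p : ℝ) - (qv b : ℝ) + 1) : ℝ) : ℂ)
      else 0 := by
  rw [← bV_apply b, Aminus, Module.Basis.constr_basis, inner_smul_right, inner_eV_eV]
  split_ifs <;> simp

lemma inner_zState_apply (T : WV →ₗ[ℂ] WV) :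
    ⟪zState, T zState⟫ =
      (⟪eV ![0, 0, 0], T (eV ![0, 0, 0])⟫ + ⟪eV ![0, 0, 0], T (eV ![0, 0, 1])⟫ +
        ⟪eV ![0, 0, 1], T (eV ![0, 0, 0])⟫ + ⟪eV ![0, 0, 1], T (eV ![0, 0, 1])⟫) / 2 := by
  have half : (((Real.sqrt 2)⁻¹ : ℝ) : ℂ) * (((Real.sqrt 2)⁻¹ : ℝ) : ℂ) = 1 / 2 := by
    rw [← Complex.ofReal_mul, ← mul_inv, Real.mul_self_sqrt (by norm_num)]
    norm_num
  simp only [zState, map_smul, map_add, inner_smul_left, inner_smul_right, inner_add_left,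
    inner_add_right, Complex.conj_ofReal]
  linear_combination (⟪eV ![0, 0, 0], T (eV ![0, 0, 0])⟫ + ⟪eV ![0, 0, 0], T (eV ![0, 0, 1])⟫ +
    ⟪eV ![0, 0, 1], T (eV ![0, 0, 0])⟫ + ⟪eV ![0, 0, 1], T (eV ![0, 0, 1])⟫) * half

lemma inner_zState_Aplus (p : ℕ) (k : Fin 3) :
    ⟪zState, Aplus p k zState⟫ = if k = 2 then (Real.sqrt p : ℂ) / 2 else 0 := by
  rw [inner_zState_apply]
  fin_cases k <;> simp +decide [inner_eV_Aplus_eV, sgnBelow, qv, Fin.sum_univ_three]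

lemma inner_zState_Aminus (p : ℕ) (k : Fin 3) :
    ⟪zState, Aminus p k zState⟫ = if k = 2 then (Real.sqrt p : ℂ) / 2 else 0 := by
  rw [inner_zState_apply]
  fin_cases k <;> simp +decide [inner_eV_Aminus_eV, sgnBelow, qv, Fin.sum_univ_three]

lemma inner_rOp_self (p : ℕ) (k : Fin 3) (t : ℝ) (v : WV) :
    ⟪v, rOp p k t v⟫ =
      Complex.exp (-(t : ℂ) * Complex.I) * ⟪v, Aplus p k v⟫ +
        Complex.exp ((t : ℂ) * Complex.I) * ⟪v, Aminus p k v⟫ := by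
  simp only [rOp, LinearMap.add_apply, LinearMap.smul_apply, inner_add_right, inner_smul_right]

lemma inner_pOp_self (p : ℕ) (k : Fin 3) (t : ℝ) (v : WV) :
    ⟪v, pOp p k t v⟫ =
      -Complex.I * (Complex.exp (-(t : ℂ) * Complex.I) * ⟪v, Aplus p k v⟫ -
        Complex.exp ((t : ℂ) * Complex.I) * ⟪v, Aminus p k v⟫) := by
  simp only [pOp, LinearMap.sub_apply, LinearMap.smul_apply, inner_sub_right, inner_smul_right]

theorem stmt17_general (p : ℕ) (t : ℝ) :
    (⟪zState, rOp p 0 t zState⟫ : ℂ) = 0 ∧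
    (⟪zState, rOp p 1 t zState⟫ : ℂ) = 0 ∧
    (⟪zState, rOp p 2 t zState⟫ : ℂ) = ((Real.sqrt p * Real.cos t : ℝ) : ℂ) ∧
    (⟪zState, pOp p 0 t zState⟫ : ℂ) = 0 ∧
    (⟪zState, pOp p 1 t zState⟫ : ℂ) = 0 ∧
    (⟪zState, pOp p 2 t zState⟫ : ℂ) = -((Real.sqrt p * Real.sin t : ℝ) : ℂ) := by
  simp only [inner_rOp_self, inner_pOp_self, inner_zState_Aplus, inner_zState_Aminus]
  refine ⟨by simp, by simp, ?_, by simp, by simp, ?_⟩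
  · rw [Complex.ofReal_mul, Complex.ofReal_cos, Complex.cos]
    simp only [if_true, neg_mul]
    ring
  · rw [Complex.ofReal_mul, Complex.ofReal_sin, Complex.sin]
    simp only [if_true, neg_mul]
    ring

/-- mean trajectories in the non-stationary state
z = (1/√2)(e_{(0,0,0)} + e_{(0,0,1)}). -/
theorem stmt17 (p : ℕ) (hp : 3 ≤ p) (t : ℝ) :
    (⟪zState, rOp p 0 t zState⟫ : ℂ) = 0 ∧
    (⟪zState, rOp p 1 t zState⟫ : ℂ) = 0 ∧
    (⟪zState, rOp p 2 t zState⟫ : ℂ) = ((Real.sqrt p * Real.cos t : ℝ) : ℂ) ∧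
    (⟪zState, pOp p 0 t zState⟫ : ℂ) = 0 ∧
    (⟪zState, pOp p 1 t zState⟫ : ℂ) = 0 ∧
    (⟪zState, pOp p 2 t zState⟫ : ℂ) = -((Real.sqrt p * Real.sin t : ℝ) : ℂ) :=
  stmt17_general p t
end
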